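/- Let A be a ring and J a two-sided ideal of A such that the blow-up ring Bl_J(A) is left Noetherian. Let M be an (A,A)-bimodule that is finitely generated as a left A-module, let a_1, …, a_k ∈ A, and set N := {m ∈ M : m·a_i = 0 for all i = 1, …, k}, a left A-submodule of M. Right multiplication by each a_i is left A-linear and preserves each J^nM, hence induces an endomorphism of the J-adic completion M^∧. Then {m ∈ M^∧ : m·a_i = 0 for all i} coincides with the image of the natural (injective) map N^∧ → M^∧. -/

import Mathlib

/-!
By the Artin–Rees lemma, proved from the Noetherianity of `Bl_J(A)` through the Rees modules
`⊕ₙ (J^nM ∩ W) Xⁿ`, which are submodules of the finitely generated `Bl_J(A)`-module `⊕ₙ J^nM Xⁿ`,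
the `J`-adic topology of any submodule `W` of `M` is induced from that of `M`. For `W = N` this
makes `N^∧ → M^∧` injective. For `W` the image of `φ = (·a₁, …, ·a_k) : M → M^k` it shows that if
`m·aᵢ ∈ J^{n+d}M` for all `i`, then `m` is congruent modulo `J^nM` to an element of `N = ker φ`.
Hence every coordinate of an `x ∈ M^∧` killed by the `aᵢ` is represented by an element of `N`, and
these representatives, shifted by the Artin–Rees constant of `N`, form a preimage in `N^∧`.
-/

open scoped Pointwise
open Polynomial

section PowSet

variable {A : Type*} [Ring A]

/-- The `n`-th power of a (two-sided) ideal `J` of a ring `A`, with the convention `J ^ 0 = A`,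
realized as an additive subgroup of `A`. -/
def powSet (J : Ideal A) : ℕ → AddSubgroup A
  | 0 => ⊤
  | 1 => J.toAddSubgroup
  | n + 2 => AddSubgroup.closure ((J : Set A) * (powSet J (n + 1) : Set A))

theorem powSet_succ_succ (J : Ideal A) (n : ℕ) :
    powSet J (n + 2) = AddSubgroup.closure ((J : Set A) * (powSet J (n + 1) : Set A)) := rfl

theorem powSet_mul_mem_left (J : Ideal A) :
    ∀ (n : ℕ) (a : A) {x : A}, x ∈ powSet J n → a * x ∈ powSet J n
  | 0, a, x, _ => AddSubgroup.mem_top _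
  | 1, a, x, hx => J.mul_mem_left a hx
  | n + 2, a, x, hx => by
    induction hx using AddSubgroup.closure_induction with
    | mem z hz =>
      obtain ⟨u, hu, v, hv, rfl⟩ := hz
      exact AddSubgroup.subset_closure
        ⟨a * u, J.mul_mem_left a hu, v, hv, mul_assoc a u v⟩
    | zero => simpa using (powSet J (n + 2)).zero_mem
    | add x y hx hy ihx ihy => simpa [mul_add] using add_mem ihx ihy
    | neg x hx ihx => simpa [mul_neg] using neg_mem ihx

theorem powSet_mul_mem_right (J : Ideal A) (hJ : ∀ x ∈ J, ∀ a : A, x * a ∈ J) :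
    ∀ (n : ℕ) (a : A) {x : A}, x ∈ powSet J n → x * a ∈ powSet J n
  | 0, a, x, _ => AddSubgroup.mem_top _
  | 1, a, x, hx => hJ x hx a
  | n + 2, a, x, hx => by
    induction hx using AddSubgroup.closure_induction with
    | mem z hz =>
      obtain ⟨u, hu, v, hv, rfl⟩ := hz
      exact AddSubgroup.subset_closure
        ⟨u, hu, v * a, powSet_mul_mem_right J hJ (n + 1) a hv, (mul_assoc u v a).symm⟩
    | zero => simpa using (powSet J (n + 2)).zero_mem
    | add x y hx hy ihx ihy => simpa [add_mul] using add_mem ihx ihy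
    | neg x hx ihx => simpa [neg_mul] using neg_mem ihx

theorem powSet_mul_mem (J : Ideal A) (hJ : ∀ x ∈ J, ∀ a : A, x * a ∈ J) :
    ∀ (i j : ℕ) {x y : A}, x ∈ powSet J i → y ∈ powSet J j → x * y ∈ powSet J (i + j)
  | 0, j, x, y, _, hy => by simpa using powSet_mul_mem_left J j x hy
  | 1, 0, x, y, hx, _ => by simpa using powSet_mul_mem_right J hJ 1 y hx
  | 1, j + 1, x, y, hx, hy => by
    rw [show 1 + (j + 1) = j + 2 from by omega, powSet_succ_succ]
    exact AddSubgroup.subset_closure ⟨x, hx, y, hy, rfl⟩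
  | i + 2, j, x, y, hx, hy => by
    rw [show i + 2 + j = (i + j) + 2 from by omega, powSet_succ_succ]
    induction hx using AddSubgroup.closure_induction with
    | mem z hz =>
      obtain ⟨u, hu, v, hv, rfl⟩ := hz
      have hvy : v * y ∈ powSet J (i + 1 + j) := powSet_mul_mem J hJ (i + 1) j hv hy
      rw [show i + 1 + j = i + j + 1 from by omega] at hvy
      exact AddSubgroup.subset_closure ⟨u, hu, v * y, hvy, (mul_assoc u v y).symm⟩
    | zero =>
      simpa using (AddSubgroup.closure ((J : Set A) * (powSet J (i + j + 1) : Set A))).zero_mem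
    | add x₁ x₂ hx₁ hx₂ ih₁ ih₂ => simpa [add_mul] using add_mem ih₁ ih₂
    | neg x₁ hx₁ ih₁ => simpa [neg_mul] using neg_mem ih₁

end PowSet

section BlowUp

variable {A : Type*} [Ring A]

/-- The blow-up ring `Bl_J(A) = ⊕_{i ≥ 0} J^i` of a two-sided ideal `J ⊆ A`, realized as the
subring of the polynomial ring `A[X]` consisting of the polynomials whose `X^i`-coefficient
lies in `J^i` for every `i`. -/
def blowUp (J : Ideal A) (hJ : ∀ x ∈ J, ∀ a : A, x * a ∈ J) : Subring A[X] where
  carrier := {p : A[X] | ∀ i : ℕ, p.coeff i ∈ powSet J i}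
  zero_mem' := fun i => by
    simp only [Polynomial.coeff_zero]; exact (powSet J i).zero_mem
  one_mem' := fun i => by
    rcases i with _ | i
    · exact AddSubgroup.mem_top _
    · simp only [Polynomial.coeff_one, Nat.succ_ne_zero, if_neg (Nat.succ_ne_zero i).symm]
      simpa using (powSet J (i + 1)).zero_mem
  add_mem' := fun {p q} hp hq i => by
    simpa [Polynomial.coeff_add] using add_mem (hp i) (hq i)
  neg_mem' := fun {p} hp i => by
    simpa [Polynomial.coeff_neg] using neg_mem (hp i)
  mul_mem' := fun {p q} hp hq n => by
    rw [Polynomial.coeff_mul]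
    refine AddSubgroup.sum_mem _ fun c hc => ?_
    have h := powSet_mul_mem J hJ c.1 c.2 (hp c.1) (hq c.2)
    rwa [show c.1 + c.2 = n from by simpa using hc] at h

end BlowUp

section Completion

variable {A : Type*} [Ring A]

theorem powSet_succ_le (J : Ideal A) :
    ∀ n : ℕ, powSet J (n + 1) ≤ powSet J n
  | 0 => le_top
  | n + 1 => by
    rw [powSet_succ_succ]
    refine (AddSubgroup.closure_le _).mpr ?_
    rintro z ⟨u, hu, v, hv, rfl⟩
    exact powSet_mul_mem_left J (n + 1) u hv

/-- For a subset `S ⊆ A` and a submodule `N` of an `A`-module `M`, the submodule `S·N` of `M`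
spanned by all products `x • m` with `x ∈ S`, `m ∈ N`. -/
def jsmul (S : Set A) {M : Type*} [AddCommGroup M] [Module A M] (N : Submodule A M) :
    Submodule A M :=
  Submodule.span A {z | ∃ x ∈ S, ∃ m ∈ N, z = x • m}

/-- The submodule `J^n M` of an `A`-module `M`. -/
def jadic (J : Ideal A) (M : Type*) [AddCommGroup M] [Module A M] (n : ℕ) : Submodule A M :=
  jsmul ((powSet J n : AddSubgroup A) : Set A) (⊤ : Submodule A M)

theorem jadic_succ_le (J : Ideal A) (M : Type*) [AddCommGroup M] [Module A M] (n : ℕ) :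
    jadic J M (n + 1) ≤ jadic J M n := by
  refine Submodule.span_mono ?_
  rintro z ⟨x, hx, m, hm, rfl⟩
  exact ⟨x, powSet_succ_le J n hx, m, hm, rfl⟩

/-- The transition map `M/J^{n+1}M → M/J^nM`. -/
def transition (J : Ideal A) (M : Type*) [AddCommGroup M] [Module A M] (n : ℕ) :
    (M ⧸ jadic J M (n + 1)) →ₗ[A] M ⧸ jadic J M n :=
  Submodule.mapQ _ _ LinearMap.id (fun _ hx => jadic_succ_le J M n hx)

/-- The `J`-adic completion `M^∧ = lim_n M/J^nM` of an `A`-module `M`, realized as the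
module of compatible sequences in `∀ n, M/J^nM`. -/
def adicCompletion (J : Ideal A) (M : Type*) [AddCommGroup M] [Module A M] :
    Submodule A (∀ n : ℕ, M ⧸ jadic J M n) where
  carrier := {f | ∀ n : ℕ, transition J M n (f (n + 1)) = f n}
  add_mem' := fun {f g} hf hg n => by
    simp only [Pi.add_apply, map_add, hf n, hg n]
  zero_mem' := fun n => by simp
  smul_mem' := fun a f hf n => by
    simp only [Pi.smul_apply, map_smul, hf n]

theorem jadic_le_comap (J : Ideal A) {M M₂ : Type*} [AddCommGroup M] [Module A M]
    [AddCommGroup M₂] [Module A M₂] (f : M →ₗ[A] M₂) (n : ℕ) :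
    jadic J M n ≤ (jadic J M₂ n).comap f := by
  rw [jadic, jsmul, Submodule.span_le]
  rintro z ⟨x, hx, m, _, rfl⟩
  simp only [SetLike.mem_coe, Submodule.mem_comap, map_smul]
  exact Submodule.subset_span ⟨x, hx, f m, Submodule.mem_top, rfl⟩

/-- The map `M/J^nM → M₂/J^nM₂` induced by a linear map `f : M → M₂`. -/
def inducedQ (J : Ideal A) {M M₂ : Type*} [AddCommGroup M] [Module A M]
    [AddCommGroup M₂] [Module A M₂] (f : M →ₗ[A] M₂) (n : ℕ) :
    (M ⧸ jadic J M n) →ₗ[A] M₂ ⧸ jadic J M₂ n :=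
  Submodule.mapQ _ _ f (jadic_le_comap J f n)

theorem transition_inducedQ (J : Ideal A) {M M₂ : Type*} [AddCommGroup M] [Module A M]
    [AddCommGroup M₂] [Module A M₂] (f : M →ₗ[A] M₂) (n : ℕ)
    (x : M ⧸ jadic J M (n + 1)) :
    transition J M₂ n (inducedQ J f (n + 1) x) = inducedQ J f n (transition J M n x) := by
  obtain ⟨m, rfl⟩ := Submodule.Quotient.mk_surjective _ x
  simp [transition, inducedQ, Submodule.mapQ_apply]

/-- The map `M^∧ → M₂^∧` between `J`-adic completions induced by a linear map `f : M → M₂`;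
this is the natural functorial structure of the `J`-adic completion. -/
def completionMap (J : Ideal A) {M M₂ : Type*} [AddCommGroup M] [Module A M]
    [AddCommGroup M₂] [Module A M₂] (f : M →ₗ[A] M₂) :
    adicCompletion J M →ₗ[A] adicCompletion J M₂ where
  toFun g := ⟨fun n => inducedQ J f n (g.1 n), fun n => by
    rw [transition_inducedQ, g.2 n]⟩
  map_add' g₁ g₂ := Subtype.ext (funext fun n => by
    simp [Submodule.coe_add, Pi.add_apply, map_add])
  map_smul' a g := Subtype.ext (funext fun n => by
    simp [Submodule.coe_smul, Pi.smul_apply, map_smul])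

end Completion

section RightMul

variable {A : Type*} [Ring A]

/-- Right multiplication by `a ∈ A` on an `(A,A)`-bimodule `M`, as a left `A`-linear
endomorphism of `M`. -/
def rmulLin (M : Type*) [AddCommGroup M] [Module A M] [Module Aᵐᵒᵖ M]
    [SMulCommClass A Aᵐᵒᵖ M] (a : A) : M →ₗ[A] M where
  toFun m := MulOpposite.op a • m
  map_add' := smul_add (MulOpposite.op a)
  map_smul' r m := by simpa using (smul_comm r (MulOpposite.op a) m).symm

end RightMul

section Filtration

variable {A : Type*} [Ring A] {M : Type*} [AddCommGroup M] [Module A M]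

theorem powSet_antitone (J : Ideal A) : Antitone (powSet J) :=
  antitone_nat_of_succ_le (powSet_succ_le J)

theorem smul_mem_jsmul {S : Set A} {W : Submodule A M} {x : A} {m : M} (hx : x ∈ S)
    (hm : m ∈ W) : x • m ∈ jsmul S W :=
  Submodule.subset_span ⟨x, hx, m, hm, rfl⟩

theorem jsmul_powSet_antitone (J : Ideal A) (W : Submodule A M) :
    Antitone fun n => jsmul (powSet J n : Set A) W := fun _ _ h =>
  Submodule.span_mono fun _ ⟨x, hx, m, hm, hz⟩ => ⟨x, powSet_antitone J h hx, m, hm, hz⟩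

theorem le_jsmul_powSet_zero (J : Ideal A) (W : Submodule A M) :
    W ≤ jsmul (powSet J 0 : Set A) W := fun m hm => by
  simpa using smul_mem_jsmul (S := (powSet J 0 : Set A)) (AddSubgroup.mem_top 1) hm

theorem powSet_smul_mem_jsmul (J : Ideal A) (hJ : ∀ x ∈ J, ∀ a : A, x * a ∈ J)
    (W : Submodule A M) {i n : ℕ} {x : A} (hx : x ∈ powSet J i) {m : M}
    (hm : m ∈ jsmul (powSet J n : Set A) W) : x • m ∈ jsmul (powSet J (i + n) : Set A) W := by
  induction hm using Submodule.span_induction generalizing x with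
  | mem z hz =>
    obtain ⟨y, hy, w, hw, rfl⟩ := hz
    rw [smul_smul]
    exact smul_mem_jsmul (powSet_mul_mem J hJ i n hx hy) hw
  | zero => simp
  | add v w _ _ ihv ihw => simpa only [smul_add] using add_mem (ihv hx) (ihw hx)
  | smul a v _ ih =>
    rw [smul_smul]
    exact ih (powSet_mul_mem_right J hJ i a hx)

theorem jadic_smul_mem (J : Ideal A) (hJ : ∀ x ∈ J, ∀ a : A, x * a ∈ J) {i n : ℕ} {x : A}
    {m : M} (hx : x ∈ powSet J i) (hm : m ∈ jadic J M n) : x • m ∈ jadic J M (i + n) :=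
  powSet_smul_mem_jsmul J hJ ⊤ hx hm

theorem jsmul_range_le_map_jadic (J : Ideal A) {M₂ : Type*} [AddCommGroup M₂] [Module A M₂]
    (φ : M →ₗ[A] M₂) (n : ℕ) :
    jsmul (powSet J n : Set A) (LinearMap.range φ) ≤ (jadic J M n).map φ := by
  rw [jsmul, Submodule.span_le]
  rintro _ ⟨x, hx, _, ⟨m, rfl⟩, rfl⟩
  exact ⟨x • m, smul_mem_jsmul hx Submodule.mem_top, map_smul φ x m⟩

theorem pi_mem_jadic (J : Ideal A) {ι : Type*} [Fintype ι] {n : ℕ} {f : ι → M}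
    (hf : ∀ i, f i ∈ jadic J M n) : f ∈ jadic J (ι → M) n := by
  classical
  rw [← Finset.univ_sum_single f]
  exact sum_mem fun i _ => jadic_le_comap J (LinearMap.single A (fun _ => M) i) n (hf i)

end Filtration

section Completion

variable {A : Type*} [Ring A] (J : Ideal A) {M M₂ M₃ : Type*} [AddCommGroup M] [Module A M]
  [AddCommGroup M₂] [Module A M₂] [AddCommGroup M₃] [Module A M₃]

open Submodule.Quotient

@[simp]
theorem inducedQ_mk (f : M →ₗ[A] M₂) (n : ℕ) (m : M) : inducedQ J f n (mk m) = mk (f m) :=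
  rfl

@[simp]
theorem transition_mk (n : ℕ) (m : M) : transition J M n (mk m) = mk m :=
  rfl

theorem completionMap_apply (f : M →ₗ[A] M₂) (x : adicCompletion J M) (n : ℕ) :
    (completionMap J f x).1 n = inducedQ J f n (x.1 n) :=
  rfl

theorem completionMap_comp (g : M₂ →ₗ[A] M₃) (f : M →ₗ[A] M₂) :
    completionMap J (g ∘ₗ f) = completionMap J g ∘ₗ completionMap J f := by
  ext x : 1
  refine Subtype.ext (funext fun n => ?_)
  obtain ⟨m, hm⟩ := mk_surjective _ (x.1 n)
  simp [completionMap_apply, ← hm]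

theorem completionMap_zero : completionMap J (0 : M →ₗ[A] M₂) = 0 := by
  ext x : 1
  refine Subtype.ext (funext fun n => ?_)
  obtain ⟨m, hm⟩ := mk_surjective _ (x.1 n)
  simp [completionMap_apply, ← hm]

theorem mk_eq_apply_of_le {x : ∀ n, M ⧸ jadic J M n} (hx : x ∈ adicCompletion J M)
    {n n' : ℕ} (h : n ≤ n') {m : M} (hm : mk m = x n') : mk m = x n := by
  induction h with
  | refl => exact hm
  | step _ ih => exact ih (by rw [← hx, ← hm, transition_mk])

theorem map_mem_jadic_of_completionMap_eq_zero {f : M →ₗ[A] M₂} {x : adicCompletion J M}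
    (hx : completionMap J f x = 0) {n : ℕ} {m : M} (hm : mk m = x.1 n) : f m ∈ jadic J M₂ n := by
  rw [← mk_eq_zero, ← inducedQ_mk, hm, ← completionMap_apply, hx]
  rfl

end Completion

section ArtinRees

open TrivSqZeroExt Polynomial

variable {A : Type*} [Ring A] (J : Ideal A) (hJ : ∀ x ∈ J, ∀ a : A, x * a ∈ J)
  {M : Type*} [AddCommGroup M] [Module A M] [Module Aᵐᵒᵖ M] [SMulCommClass A Aᵐᵒᵖ M]

/- `Bl_J(A) ⊆ A[X]` acts on `(A ⊕ M)[X]` through `A → A ⊕ M`; Rees modules of filtrations of `M`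
live in the `M`-part. -/
noncomputable local instance : Module (blowUp J hJ) (TrivSqZeroExt A M)[X] :=
  Module.compHom _ ((mapRingHom (inlHom A M)).comp (blowUp J hJ).subtype)

theorem blowUp_smul_def (q : blowUp J hJ) (p : (TrivSqZeroExt A M)[X]) :
    q • p = map (inlHom A M) (q : A[X]) * p :=
  rfl

theorem monomial_mem_blowUp {n : ℕ} {x : A} (hx : x ∈ powSet J n) :
    monomial n x ∈ blowUp J hJ := fun i => by
  rw [coeff_monomial]
  split_ifs with h
  · exact h ▸ hx
  · exact zero_mem _

theorem monomial_smul_monomial_inr {i : ℕ} {x : A} (hx : x ∈ powSet J i) (n : ℕ) (m : M) :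
    (⟨monomial i x, monomial_mem_blowUp J hJ hx⟩ : blowUp J hJ) • monomial n (inr m) =
      (monomial (i + n) (inr (x • m)) : (TrivSqZeroExt A M)[X]) := by
  simp [blowUp_smul_def, monomial_mul_monomial, inl_mul_inr]

/-- The Rees module `⊕ₙ Fₙ Xⁿ` of a filtration `F` of `M` compatible with the powers of `J`. -/
noncomputable def reesModule (F : ℕ → Submodule A M)
    (hF : ∀ {i n : ℕ} {x : A} {m : M}, x ∈ powSet J i → m ∈ F n → x • m ∈ F (i + n)) :
    Submodule (blowUp J hJ) (TrivSqZeroExt A M)[X] where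
  carrier := {p | ∀ n, (p.coeff n).fst = 0 ∧ (p.coeff n).snd ∈ F n}
  zero_mem' n := by simp
  add_mem' hp hq n := by simpa using ⟨by rw [(hp n).1, (hq n).1, add_zero],
    add_mem (hp n).2 (hq n).2⟩
  smul_mem' q p hp n := by
    rw [blowUp_smul_def, coeff_mul, fst_sum, snd_sum]
    refine ⟨Finset.sum_eq_zero fun x _ => by simp [(hp x.2).1], sum_mem fun x hx => ?_⟩
    rw [Finset.HasAntidiagonal.mem_antidiagonal] at hx
    simpa [hx] using hF (q.2 x.1) (hp x.2).2

theorem monomial_inr_mem_reesModule {F : ℕ → Submodule A M}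
    (hF : ∀ {i n : ℕ} {x : A} {m : M}, x ∈ powSet J i → m ∈ F n → x • m ∈ F (i + n))
    {n : ℕ} {m : M} (hm : m ∈ F n) : monomial n (inr m) ∈ reesModule J hJ F hF := fun j => by
  rw [coeff_monomial]
  split_ifs with h
  · exact ⟨rfl, h ▸ hm⟩
  · simp

theorem monomial_inr_mem_span_C_inr {s : Set M} (hs : Submodule.span A s = ⊤) {n : ℕ} {m : M}
    (hm : m ∈ jadic J M n) :
    monomial n (inr m : TrivSqZeroExt A M) ∈
      Submodule.span (blowUp J hJ) ((fun t => C (inr t : TrivSqZeroExt A M)) '' s) := by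
  induction hm using Submodule.span_induction with
  | mem _ h =>
    obtain ⟨x, hx, u, -, rfl⟩ := h
    have hu : u ∈ Submodule.span A s := hs ▸ Submodule.mem_top
    induction hu using Submodule.span_induction generalizing x with
    | mem t ht =>
      rw [← add_zero n, ← monomial_smul_monomial_inr J hJ hx, monomial_zero_left]
      exact Submodule.smul_mem _ _ (Submodule.subset_span ⟨t, ht, rfl⟩)
    | zero => simp
    | add v w _ _ ihv ihw =>
      simpa only [smul_add, inr_add, map_add] using add_mem (ihv x hx) (ihw x hx)
    | smul a v _ ih =>
      rw [smul_smul]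
      exact ih _ (powSet_mul_mem_right J hJ n a hx)
  | zero => simp
  | add v w _ _ ihv ihw => simpa only [inr_add, map_add] using add_mem ihv ihw
  | smul a v _ ih =>
    rw [← zero_add n, ← monomial_smul_monomial_inr J hJ (AddSubgroup.mem_top a)]
    exact Submodule.smul_mem _ _ ih

theorem reesModule_jadic_fg [Module.Finite A M] :
    (reesModule J hJ (jadic J M) (jadic_smul_mem J hJ)).FG := by
  classical
  obtain ⟨s, hs⟩ := Module.Finite.fg_top (R := A) (M := M)
  refine ⟨s.image fun t => C (inr t), le_antisymm ?_ fun p hp => ?_⟩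
  · rw [Finset.coe_image, Submodule.span_le]
    rintro _ ⟨t, -, rfl⟩
    exact monomial_inr_mem_reesModule J hJ _ (le_jsmul_powSet_zero J ⊤ Submodule.mem_top)
  · rw [p.as_sum_support, Finset.coe_image]
    refine sum_mem fun n _ => ?_
    rw [show p.coeff n = inr (p.coeff n).snd from TrivSqZeroExt.ext (hp n).1 rfl]
    exact monomial_inr_mem_span_C_inr J hJ hs (hp n).2

theorem artin_rees [Module.Finite A M] (hbl : IsNoetherianRing (blowUp J hJ))
    (W : Submodule A M) :
    ∃ c, ∀ n, jadic J M (n + c) ⊓ W ≤ jsmul (powSet J n : Set A) W := by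
  have := hbl
  let R := reesModule J hJ (fun n => jadic J M n ⊓ W)
    fun hx hm => ⟨jadic_smul_mem J hJ hx hm.1, W.smul_mem _ hm.2⟩
  have hRM : R ≤ reesModule J hJ (jadic J M) (jadic_smul_mem J hJ) :=
    fun p hp n => ⟨(hp n).1, (hp n).2.1⟩
  obtain ⟨S, hS⟩ := (reesModule_jadic_fg J hJ).of_le hRM
  refine ⟨S.sup natDegree, fun n m hm => ?_⟩
  -- `S` generates `R` in degrees `≤ c := S.sup natDegree`, so degree `j` of `R` lies in `J^{j-c}W`
  have hR : R ≤ reesModule J hJ (fun n => jsmul (powSet J (n - S.sup natDegree) : Set A) W)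
      fun hx hm => jsmul_powSet_antitone J W (by omega) (powSet_smul_mem_jsmul J hJ W hx hm) := by
    rw [← hS, Submodule.span_le]
    intro p hpS j
    by_cases hj : j ≤ S.sup natDegree
    · have hpR : p ∈ R := hS ▸ Submodule.subset_span hpS
      refine ⟨(hpR j).1, ?_⟩
      dsimp only
      rw [Nat.sub_eq_zero_of_le hj]
      exact le_jsmul_powSet_zero J W (hpR j).2.2
    · rw [coeff_eq_zero_of_natDegree_lt ((Finset.le_sup hpS).trans_lt (not_le.mp hj))]
      simp
  simpa using (hR (monomial_inr_mem_reesModule J hJ _ hm) (n + S.sup natDegree)).2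

end ArtinRees

section SubmoduleCompletion

variable {A : Type*} [Ring A] (J : Ideal A) {M : Type*} [AddCommGroup M] [Module A M]
  {N : Submodule A M} {c : ℕ}

open Submodule.Quotient

theorem mem_jadic_of_coe_mem_jadic
    (hc : ∀ n, jadic J M (n + c) ⊓ N ≤ jsmul (powSet J n : Set A) N) {n : ℕ} {v : N}
    (hv : (v : M) ∈ jadic J M (n + c)) : v ∈ jadic J N n := by
  obtain ⟨w, hw, hwv⟩ :=
    jsmul_range_le_map_jadic J N.subtype n (by rw [N.range_subtype]; exact hc n ⟨hv, v.2⟩)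
  rwa [Subtype.ext hwv] at hw

theorem completionMap_subtype_injective
    (hc : ∀ n, jadic J M (n + c) ⊓ N ≤ jsmul (powSet J n : Set A) N) :
    Function.Injective (completionMap J N.subtype) := by
  refine (injective_iff_map_eq_zero _).2 fun g hg => Subtype.ext (funext fun n => ?_)
  obtain ⟨v, hv⟩ := mk_surjective _ (g.1 (n + c))
  rw [← mk_eq_apply_of_le J g.2 (Nat.le_add_right n c) hv]
  exact (mk_eq_zero _).2
    (mem_jadic_of_coe_mem_jadic J hc (map_mem_jadic_of_completionMap_eq_zero J hg hv))

theorem mem_range_completionMap_subtype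
    (hc : ∀ n, jadic J M (n + c) ⊓ N ≤ jsmul (powSet J n : Set A) N) {x : adicCompletion J M}
    (hx : ∀ n, ∃ u ∈ N, mk u = x.1 n) : x ∈ LinearMap.range (completionMap J N.subtype) := by
  choose u huN hu using hx
  have hv n : mk (u (n + c)) = x.1 n := mk_eq_apply_of_le J x.2 (Nat.le_add_right n c) (hu _)
  refine ⟨⟨fun n => mk (⟨u (n + c), huN _⟩ : N), fun n => ?_⟩, Subtype.ext (funext hv)⟩
  rw [transition_mk, Submodule.Quotient.eq]
  refine mem_jadic_of_coe_mem_jadic J hc ((Submodule.Quotient.eq _).1 ?_)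
  exact (mk_eq_apply_of_le J x.2 (by omega) (hu (n + 1 + c))).trans (hu (n + c)).symm

theorem exists_mem_ker_sub_mem_jadic {M₂ : Type*} [AddCommGroup M₂] [Module A M₂]
    (φ : M →ₗ[A] M₂)
    (hc : ∀ n, jadic J M₂ (n + c) ⊓ LinearMap.range φ ≤
      jsmul (powSet J n : Set A) (LinearMap.range φ))
    {n : ℕ} {m : M} (hm : φ m ∈ jadic J M₂ (n + c)) :
    ∃ u ∈ LinearMap.ker φ, m - u ∈ jadic J M n := by
  obtain ⟨m', hm', hφ⟩ := jsmul_range_le_map_jadic J φ n (hc n ⟨hm, m, rfl⟩)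
  exact ⟨m - m', by simp [hφ], by simpa using hm'⟩

end SubmoduleCompletion

/-- Let `A` be a ring and `J` a two-sided ideal of `A` such that the blow-up
ring `Bl_J(A)` is left Noetherian. Let `M` be an `(A,A)`-bimodule that is finitely generated as
a left `A`-module, let `a₁, …, a_k ∈ A`, and let `N := {m ∈ M : m·aᵢ = 0 for all i}` — a left
`A`-submodule of `M`. Then the annihilator `{m ∈ M^∧ : m·aᵢ = 0 for all i}` of the `aᵢ` in the
`J`-adic completion `M^∧` coincides with the image of the natural (injective) map
`N^∧ → M^∧`. -/
theorem annihilator_completion {A : Type*} [Ring A] (J : Ideal A)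
    (hJtwoSided : ∀ x ∈ J, ∀ a : A, x * a ∈ J)
    (hbl : IsNoetherianRing (blowUp J hJtwoSided))
    (M : Type*) [AddCommGroup M] [Module A M] [Module Aᵐᵒᵖ M]
    [SMulCommClass A Aᵐᵒᵖ M] [Module.Finite A M]
    (k : ℕ) (a : Fin k → A) :
    Function.Injective
      (completionMap J (Submodule.subtype (⨅ i : Fin k, LinearMap.ker (rmulLin M (a i))))) ∧
    Set.range
      (completionMap J (Submodule.subtype (⨅ i : Fin k, LinearMap.ker (rmulLin M (a i))))) =
      {x : adicCompletion J M | ∀ i : Fin k, completionMap J (rmulLin M (a i)) x = 0} := by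
  set N := ⨅ i : Fin k, LinearMap.ker (rmulLin M (a i))
  let φ : M →ₗ[A] Fin k → M := LinearMap.pi fun i => rmulLin M (a i)
  obtain ⟨c, hc⟩ := artin_rees J hJtwoSided hbl N
  obtain ⟨d, hd⟩ := artin_rees J hJtwoSided hbl (LinearMap.range φ)
  refine ⟨completionMap_subtype_injective J hc, Set.ext fun x => ⟨?_, fun hx => ?_⟩⟩
  · rintro ⟨g, rfl⟩ i
    have hker : rmulLin M (a i) ∘ₗ N.subtype = 0 :=
      LinearMap.ext fun v => (Submodule.mem_iInf _).1 v.2 i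
    rw [← LinearMap.comp_apply, ← completionMap_comp, hker, completionMap_zero,
      LinearMap.zero_apply]
  · refine mem_range_completionMap_subtype J hc fun n => ?_
    obtain ⟨m, hm⟩ := Submodule.Quotient.mk_surjective _ (x.1 (n + d))
    have hφm : φ m ∈ jadic J (Fin k → M) (n + d) :=
      pi_mem_jadic J fun i => map_mem_jadic_of_completionMap_eq_zero J (hx i) hm
    obtain ⟨u, hu, hmu⟩ := exists_mem_ker_sub_mem_jadic J φ hd hφm
    refine ⟨u, by rwa [LinearMap.ker_pi] at hu, ?_⟩
    exact ((Submodule.Quotient.eq _).2 hmu).symm.trans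
      (mk_eq_apply_of_le J x.2 (Nat.le_add_right n d) hm)
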